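/- In the coevolutionary action–opinion public goods game, fix a player i with parameters γ ≥ 0, β > 0, λ > 0, multiplier r, and n players, and let ȳ = ∑_j w_{ij} y_j and δ = γ·(r/n − 1) + (2βλ/(β+λ))·ȳ. Then the maximizers of the payoff f_i over the joint strategy set {−1,+1} × [−1,1] are: if δ > 0 the unique maximizer is (+1, (βȳ + λ)/(β+λ)); if δ < 0 the unique maximizer is (−1, (βȳ − λ)/(β+λ)); and if δ = 0 the maximizers are exactly these two points. In particular, the discriminant δ depends on the states of the other players only through their opinions. -/
import Mathlib

set_option maxHeartbeats 1000000


open Finset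

/-- Payoff of player `i` in the coevolutionary action–opinion public goods game with
multiplier `r`, for choosing the pair `(a,b) ∈ {-1,+1} × [-1,1]` against the actions
`x` and opinions `y` of the others. -/
noncomputable def coevPGGPayoff (n : ℕ) (W : Fin n → Fin n → ℝ) (r : ℝ)
    (γ β lam : ℝ) (i : Fin n) (x y : Fin n → ℝ) (a b : ℝ) : ℝ :=
  γ * (r * (((n : ℝ) - 1 + ∑ j ∈ univ.erase i, x j) / (2 * n)) +
        (r / n - 1) * (a + 1) / 2)
    - β / 2 * ∑ j, W i j * (b - y j) ^ 2
    - lam / 2 * (a - b) ^ 2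

/-- `(a,b)` is a maximizer of `f` over the joint strategy set `{-1,+1} × [-1,1]`. -/
def IsJointMaximizer (f : ℝ → ℝ → ℝ) (a b : ℝ) : Prop :=
  (a = -1 ∨ a = 1) ∧ b ∈ Set.Icc (-1 : ℝ) 1 ∧
    ∀ a' b' : ℝ, (a' = -1 ∨ a' = 1) → b' ∈ Set.Icc (-1 : ℝ) 1 → f a' b' ≤ f a b

/-- In the coevolutionary action–opinion public goods game, with
`ȳ = ∑_j w_{ij} y_j` and discriminant `δ = γ (r/n - 1) + (2βλ/(β+λ)) ȳ` (which
depends on the others only through their opinions), the maximizers of player `i`'s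
payoff over `{-1,+1} × [-1,1]` are: for `δ > 0` uniquely `(+1, (βȳ+λ)/(β+λ))`; for
`δ < 0` uniquely `(-1, (βȳ-λ)/(β+λ))`; and for `δ = 0` exactly these two points. -/
theorem coev_pgg_best_response_characterization
    (n : ℕ) (hn : 2 ≤ n) (W : Fin n → Fin n → ℝ)
    (hW : ∀ i j, 0 ≤ W i j) (hWdiag : ∀ i, W i i = 0) (hWrow : ∀ i, ∑ j, W i j = 1)
    (r : ℝ) (γ β lam : ℝ) (hγ : 0 ≤ γ) (hβ : 0 < β) (hlam : 0 < lam)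
    (i : Fin n) (x y : Fin n → ℝ)
    (hx : ∀ j, x j = -1 ∨ x j = 1) (hy : ∀ j, y j ∈ Set.Icc (-1 : ℝ) 1)
    (ybar δ : ℝ)
    (hybar : ybar = ∑ j, W i j * y j)
    (hδ : δ = γ * (r / n - 1) + 2 * β * lam / (β + lam) * ybar) :
    (δ > 0 → ∀ a b : ℝ,
      (IsJointMaximizer (coevPGGPayoff n W r γ β lam i x y) a b ↔
        a = 1 ∧ b = (β * ybar + lam) / (β + lam))) ∧
    (δ < 0 → ∀ a b : ℝ,
      (IsJointMaximizer (coevPGGPayoff n W r γ β lam i x y) a b ↔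
        a = -1 ∧ b = (β * ybar - lam) / (β + lam))) ∧
    (δ = 0 → ∀ a b : ℝ,
      (IsJointMaximizer (coevPGGPayoff n W r γ β lam i x y) a b ↔
        ((a = 1 ∧ b = (β * ybar + lam) / (β + lam)) ∨
          (a = -1 ∧ b = (β * ybar - lam) / (β + lam))))) := by
  have hbl : (0:ℝ) < β + lam := by linarith
  have hbl' : (β + lam) ≠ 0 := ne_of_gt hbl
  have hn0 : (n:ℝ) ≠ 0 := by positivity
  set F : ℝ → ℝ → ℝ := coevPGGPayoff n W r γ β lam i x y with hFdef
  set A : ℝ := γ * (r * (((n : ℝ) - 1 + ∑ j ∈ univ.erase i, x j) / (2 * n))) with hA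
  set S : ℝ := ∑ j, W i j * (y j)^2 with hS
  -- expand the quadratic sum
  have hsum : ∀ b : ℝ, (∑ j, W i j * (b - y j) ^ 2) = b^2 - 2*b*ybar + S := by
    intro b
    have h1 : ∀ j ∈ univ, W i j * (b - y j)^2
        = b^2 * W i j - 2*b*(W i j * y j) + W i j * (y j)^2 := by
      intro j _; ring
    rw [Finset.sum_congr rfl h1, Finset.sum_add_distrib, Finset.sum_sub_distrib,
      ← Finset.mul_sum, ← Finset.mul_sum, hWrow i, hybar, hS]
    ring
  have hF : ∀ a b : ℝ, F a b
      = A + γ * (r/n - 1) * (a+1)/2 - β/2 * (b^2 - 2*b*ybar + S)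
        - lam/2*(a-b)^2 := by
    intro a b
    show coevPGGPayoff n W r γ β lam i x y a b = _
    rw [coevPGGPayoff, hsum b, hA]
    ring
  -- bounds on ybar
  have hyb1 : ybar ≤ 1 := by
    rw [hybar]
    calc (∑ j, W i j * y j) ≤ ∑ j, W i j := by
          apply Finset.sum_le_sum
          intro j _
          nlinarith [hW i j, (hy j).2]
      _ = 1 := hWrow i
  have hyb2 : -1 ≤ ybar := by
    rw [hybar]
    calc (-1:ℝ) = -(∑ j, W i j) := by rw [hWrow i]
      _ ≤ ∑ j, W i j * y j := by
          rw [← Finset.sum_neg_distrib]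
          apply Finset.sum_le_sum
          intro j _
          nlinarith [hW i j, (hy j).1]
  set bp : ℝ := (β * ybar + lam) / (β + lam) with hbp
  set bm : ℝ := (β * ybar - lam) / (β + lam) with hbm
  have hbp_mem : bp ∈ Set.Icc (-1:ℝ) 1 := by
    rw [hbp, Set.mem_Icc]
    constructor
    · rw [le_div_iff₀ hbl]; nlinarith
    · rw [div_le_one hbl]; nlinarith
  have hbm_mem : bm ∈ Set.Icc (-1:ℝ) 1 := by
    rw [hbm, Set.mem_Icc]
    constructor
    · rw [le_div_iff₀ hbl]; nlinarith
    · rw [div_le_one hbl]; nlinarith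
  -- quadratic identities
  have e1p : ∀ b : ℝ, F 1 b = F 1 bp - (β+lam)/2 * (b - bp)^2 := by
    intro b
    rw [hF, hF, hbp]
    field_simp
    ring
  have e1m : ∀ b : ℝ, F (-1) b = F (-1) bm - (β+lam)/2 * (b - bm)^2 := by
    intro b
    rw [hF, hF, hbm]
    field_simp
    ring
  have e2 : F 1 bp - F (-1) bm = δ := by
    rw [hF, hF, hbp, hbm, hδ]
    field_simp
    ring
  -- the two candidate maximizers
  have hmax_p : 0 ≤ δ → IsJointMaximizer F 1 bp := by
    intro hd
    refine ⟨Or.inr rfl, hbp_mem, ?_⟩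
    rintro a' b' (rfl | rfl) hb'
    · rw [e1m b']
      nlinarith [sq_nonneg (b' - bm)]
    · rw [e1p b']
      nlinarith [sq_nonneg (b' - bp)]
  have hmax_m : δ ≤ 0 → IsJointMaximizer F (-1) bm := by
    intro hd
    refine ⟨Or.inl rfl, hbm_mem, ?_⟩
    rintro a' b' (rfl | rfl) hb'
    · rw [e1m b']
      nlinarith [sq_nonneg (b' - bm)]
    · rw [e1p b']
      nlinarith [sq_nonneg (b' - bp)]
  -- forward direction
  have hforward : ∀ a b : ℝ, IsJointMaximizer F a b →
      (a = 1 ∧ b = bp ∧ 0 ≤ δ) ∨ (a = -1 ∧ b = bm ∧ δ ≤ 0) := by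
    rintro a b ⟨(rfl | rfl), hb, hle⟩
    · -- a = -1
      right
      have h1 : F 1 bp ≤ F (-1) b := hle 1 bp (Or.inr rfl) hbp_mem
      have h2 : F (-1) b = F (-1) bm - (β+lam)/2 * (b - bm)^2 := e1m b
      have h3 : F (-1) bm ≤ F (-1) b := hle (-1) bm (Or.inl rfl) hbm_mem
      have hsq : (b - bm)^2 ≤ 0 := by nlinarith
      have hb0 : b - bm = 0 := by
        have := sq_nonneg (b - bm)
        have : (b - bm)^2 = 0 := le_antisymm hsq this
        exact pow_eq_zero_iff two_ne_zero |>.mp this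
      refine ⟨rfl, by linarith [sub_eq_zero.mp hb0], ?_⟩
      nlinarith [sq_nonneg (b - bm)]
    · -- a = 1
      left
      have h1 : F (-1) bm ≤ F 1 b := hle (-1) bm (Or.inl rfl) hbm_mem
      have h2 : F 1 b = F 1 bp - (β+lam)/2 * (b - bp)^2 := e1p b
      have h3 : F 1 bp ≤ F 1 b := hle 1 bp (Or.inr rfl) hbp_mem
      have hsq : (b - bp)^2 ≤ 0 := by nlinarith
      have hb0 : b - bp = 0 := by
        have := sq_nonneg (b - bp)
        have : (b - bp)^2 = 0 := le_antisymm hsq this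
        exact pow_eq_zero_iff two_ne_zero |>.mp this
      refine ⟨rfl, by linarith [sub_eq_zero.mp hb0], ?_⟩
      nlinarith [sq_nonneg (b - bp)]
  refine ⟨?_, ?_, ?_⟩
  · intro hd a b
    constructor
    · intro hmax
      rcases hforward a b hmax with ⟨ha, hb, _⟩ | ⟨ha, hb, hd'⟩
      · exact ⟨ha, hb⟩
      · linarith
    · rintro ⟨rfl, rfl⟩
      exact hmax_p hd.le
  · intro hd a b
    constructor
    · intro hmax
      rcases hforward a b hmax with ⟨ha, hb, hd'⟩ | ⟨ha, hb, _⟩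
      · linarith
      · exact ⟨ha, hb⟩
    · rintro ⟨rfl, rfl⟩
      exact hmax_m hd.le
  · intro hd a b
    constructor
    · intro hmax
      rcases hforward a b hmax with ⟨ha, hb, _⟩ | ⟨ha, hb, _⟩
      · exact Or.inl ⟨ha, hb⟩
      · exact Or.inr ⟨ha, hb⟩
    · rintro (⟨rfl, rfl⟩ | ⟨rfl, rfl⟩)
      · exact hmax_p hd.ge
      · exact hmax_m hd.le
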